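/- Let H be a Hermitian matrix with spectral gap c > 0 between its ground energy and first excited energy, and let ρ be the uniform mixture over the ground space (the β=∞ Gibbs state). Then for any observable O with ‖O‖ ≤ 1, the Gaussian-weighted operator Fourier transform Ô(τ) = Σ_ν e^{−ν²/(4τ²)} O_ν satisfies ‖[Ô(τ), ρ]‖₁ ≤ 2 e^{−c²/(4τ²)}. -/

import Mathlib

open Matrix
open scoped Matrix.Norms.L2Operator ComplexOrder

/-- The trace (Schatten 1) norm of a complex square matrix. -/
noncomputable def traceNorm {n : Type*} [Fintype n] [DecidableEq n] (A : Matrix n n ℂ) : ℝ :=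
  (((Matrix.posSemidef_conjTranspose_mul_self A).1.eigenvectorUnitary : Matrix n n ℂ) *
    diagonal (((↑) : ℝ → ℂ) ∘ (√·) ∘ (Matrix.posSemidef_conjTranspose_mul_self A).1.eigenvalues) *
    (star (Matrix.posSemidef_conjTranspose_mul_self A).1.eigenvectorUnitary : Matrix n n ℂ)).trace.re

/-! Let `P` be the ground-space projection and `Q = 1 - P`. Since `ρ = P / tr P`, the commutator
`[Ô, ρ]` equals `(QÔP - PÔQ) / tr P`. Both off-diagonal blocks only see pairs of energies on
opposite sides of the gap, whose Gaussian weights are at most `e^{-c²/(4τ²)}`, so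
`‖[Ô, ρ]‖ ≤ e^{-c²/(4τ²)} / tr P`. The commutator has rank at most `2 rank P = 2 tr P`, and the
trace norm is bounded by the operator norm times the rank. -/

open scoped MatrixOrder

/-- With `f i j = e^{-(E i - E j)²/(4τ²)}` this is the operator Fourier transform `Ô(τ)`. -/
def blockSchurMul {𝕜 R ι : Type*} [CommSemiring 𝕜] [Ring R] [Algebra 𝕜 R] [Fintype ι]
    (p : ι → R) (f : ι → ι → 𝕜) (x : R) : R :=
  ∑ i, ∑ j, f i j • (p i * x * p j)

section Ring

variable {𝕜 R ι : Type*} [CommSemiring 𝕜] [Ring R] [Algebra 𝕜 R] [Fintype ι] [DecidableEq ι]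
  {p : ι → R}

lemma mul_sub_mul_eq_offDiag (x q : R) : x * q - q * x = (1 - q) * x * q + q * -x * (1 - q) := by
  noncomm_ring

omit [Fintype ι] in
lemma mul_proj_eq_ite (hidem : ∀ k, IsIdempotentElem (p k))
    (horth : Pairwise fun i j => p i * p j = 0) (i j : ι) :
    p i * p j = if i = j then p i else 0 := by
  split_ifs with h
  · rw [h, (hidem j).eq]
  · exact horth h

lemma one_sub_mul_blockSchurMul_mul (hidem : ∀ k, IsIdempotentElem (p k))
    (horth : Pairwise fun i j => p i * p j = 0) (f : ι → ι → 𝕜) (x : R) (k : ι) :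
    (1 - p k) * blockSchurMul p f x * p k = (∑ i ∈ Finset.univ.erase k, f i k • p i) * x * p k := by
  simp [blockSchurMul, Finset.mul_sum, Finset.sum_mul, sub_mul, mul_assoc,
    mul_proj_eq_ite hidem horth, ← mul_assoc (p _) (p _), smul_sub, Finset.sum_sub_distrib,
    smul_ite, Finset.sum_ite_eq']

lemma mul_blockSchurMul_mul_one_sub (hidem : ∀ k, IsIdempotentElem (p k))
    (horth : Pairwise fun i j => p i * p j = 0) (f : ι → ι → 𝕜) (x : R) (k : ι) :
    p k * blockSchurMul p f x * (1 - p k) = p k * x * ∑ j ∈ Finset.univ.erase k, f k j • p j := by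
  simp [blockSchurMul, Finset.mul_sum, Finset.sum_mul, mul_sub, mul_assoc,
    mul_proj_eq_ite hidem horth, ← mul_assoc (p _) (p _)]

end Ring

section CStarAlgebra

variable {A : Type*} [CStarAlgebra A] [PartialOrder A] [StarOrderedRing A]

lemma norm_le_of_star_mul_self_le {y : A} {a : ℝ} (ha : 0 ≤ a) (h : star y * y ≤ a ^ 2 • 1) :
    ‖y‖ ≤ a := by
  have hsq : ‖star y * y‖ ≤ a ^ 2 := by
    rw [CStarAlgebra.norm_le_iff_le_algebraMap _ (sq_nonneg a), Algebra.algebraMap_eq_smul_one]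
    exact h
  rw [CStarRing.norm_star_mul_self, ← sq] at hsq
  exact (pow_le_pow_iff_left₀ (norm_nonneg y) ha two_ne_zero).mp hsq

lemma IsStarProjection.star_mul_self_le {p u : A} (hp : IsStarProjection p) (hu : u * p = u)
    {a : ℝ} (hua : ‖u‖ ≤ a) : star u * u ≤ a ^ 2 • p := by
  have hconj : star p * (star u * u) * p ≤ star p * (a ^ 2 • 1) * p := by
    refine star_left_conjugate_le_conjugate ?_ p
    refine CStarAlgebra.star_mul_le_algebraMap_norm_sq.trans ?_
    rw [Algebra.algebraMap_eq_smul_one]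
    exact smul_le_smul_of_nonneg_right (pow_le_pow_left₀ (norm_nonneg u) hua 2) zero_le_one
  calc star u * u = star (u * p) * (u * p) := by rw [hu]
    _ = star p * (star u * u) * p := by rw [star_mul]; noncomm_ring
    _ ≤ star p * (a ^ 2 • 1) * p := hconj
    _ = a ^ 2 • p := by
      rw [hp.isSelfAdjoint.star_eq, mul_smul_comm, smul_mul_assoc, mul_one,
        hp.isIdempotentElem.eq]

lemma IsStarProjection.norm_add_offDiag_le {p x y : A} (hp : IsStarProjection p) {a : ℝ}
    (ha : 0 ≤ a) (hx : ‖(1 - p) * x * p‖ ≤ a) (hy : ‖p * y * (1 - p)‖ ≤ a) :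
    ‖(1 - p) * x * p + p * y * (1 - p)‖ ≤ a := by
  set q := 1 - p
  have hq : IsStarProjection q := hp.one_sub
  have hxy : star (q * x * p) * (p * y * q) = 0 := by
    calc _ = star p * star x * (star q * p) * (y * q) := by simp only [star_mul, mul_assoc]
      _ = 0 := by rw [hq.isSelfAdjoint.star_eq, hp.one_sub_mul_self, mul_zero, zero_mul]
  have hyx : star (p * y * q) * (q * x * p) = 0 := by
    calc _ = star q * star y * (star p * q) * (x * p) := by simp only [star_mul, mul_assoc]
      _ = 0 := by rw [hp.isSelfAdjoint.star_eq, hp.mul_one_sub_self, mul_zero, zero_mul]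
  refine norm_le_of_star_mul_self_le ha ?_
  calc _ = star (q * x * p) * (q * x * p) + star (p * y * q) * (p * y * q) := by
        rw [star_add, add_mul, mul_add, mul_add, hxy, hyx, add_zero, zero_add]
    _ ≤ a ^ 2 • p + a ^ 2 • q :=
      add_le_add (hp.star_mul_self_le (by rw [mul_assoc, hp.isIdempotentElem.eq]) hx)
        (hq.star_mul_self_le (by rw [mul_assoc, hq.isIdempotentElem.eq]) hy)
    _ = a ^ 2 • 1 := by rw [← smul_add, add_sub_cancel]

variable {ι : Type*} [Fintype ι] {p : ι → A}

lemma norm_sum_smul_le_of_orthogonal (hp : ∀ i, IsStarProjection (p i))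
    (horth : Pairwise fun i j => p i * p j = 0) (hsum : ∑ i, p i = 1) (s : Finset ι)
    (w : ι → ℝ) {ε : ℝ} (hε : 0 ≤ ε) (hw : ∀ i ∈ s, |w i| ≤ ε) : ‖∑ i ∈ s, w i • p i‖ ≤ ε := by
  refine norm_le_of_star_mul_self_le hε ?_
  have hsq : star (∑ i ∈ s, w i • p i) * (∑ i ∈ s, w i • p i) = ∑ i ∈ s, w i ^ 2 • p i := by
    simp only [star_sum, star_smul, star_trivial, (hp _).isSelfAdjoint.star_eq,
      Finset.sum_mul_sum]
    refine Finset.sum_congr rfl fun i hi => ?_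
    rw [Finset.sum_eq_single_of_mem i hi fun j _ hji => by
      rw [smul_mul_smul_comm, horth (Ne.symm hji), smul_zero]]
    rw [smul_mul_smul_comm, (hp i).isIdempotentElem.eq, sq]
  calc _ = ∑ i ∈ s, w i ^ 2 • p i := hsq
    _ ≤ ∑ i ∈ s, ε ^ 2 • p i := Finset.sum_le_sum fun i hi =>
      smul_le_smul_of_nonneg_right (sq_le_sq' (abs_le.mp (hw i hi)).1 (abs_le.mp (hw i hi)).2)
        (hp i).nonneg
    _ ≤ ∑ i, ε ^ 2 • p i := Finset.sum_le_sum_of_subset_of_nonneg (Finset.subset_univ s)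
      fun i _ _ => smul_nonneg (sq_nonneg ε) (hp i).nonneg
    _ = ε ^ 2 • 1 := by rw [← Finset.smul_sum, hsum]

lemma norm_blockSchurMul_mul_sub_mul_le [DecidableEq ι] (hp : ∀ i, IsStarProjection (p i))
    (horth : Pairwise fun i j => p i * p j = 0) (hsum : ∑ i, p i = 1) (f : ι → ι → ℝ) (k : ι)
    {ε : ℝ} (hε : 0 ≤ ε) (hfk : ∀ i, i ≠ k → |f i k| ≤ ε ∧ |f k i| ≤ ε) (x : A) :
    ‖blockSchurMul p f x * p k - p k * blockSchurMul p f x‖ ≤ ε * ‖x‖ := by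
  have hidem i := (hp i).isIdempotentElem
  have hD (g : ι → ℝ) (hg : ∀ i, i ≠ k → |g i| ≤ ε) : ‖∑ i ∈ Finset.univ.erase k, g i • p i‖ ≤ ε :=
    norm_sum_smul_le_of_orthogonal hp horth hsum _ g hε fun i hi => hg i (Finset.ne_of_mem_erase hi)
  rw [mul_sub_mul_eq_offDiag]
  refine (hp k).norm_add_offDiag_le (by positivity) ?_ ?_
  · rw [one_sub_mul_blockSchurMul_mul hidem horth]
    calc _ ≤ ‖∑ i ∈ Finset.univ.erase k, f i k • p i‖ * ‖x‖ * ‖p k‖ := norm_mul₃_le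
      _ ≤ ε * ‖x‖ * 1 := by
        gcongr
        exacts [hD _ fun i hi => (hfk i hi).1, (hp k).norm_le]
      _ = ε * ‖x‖ := mul_one _
  · rw [mul_neg, neg_mul, norm_neg, mul_blockSchurMul_mul_one_sub hidem horth]
    calc _ ≤ ‖p k‖ * ‖x‖ * ‖∑ j ∈ Finset.univ.erase k, f k j • p j‖ := norm_mul₃_le
      _ ≤ 1 * ‖x‖ * ε := by
        gcongr
        exacts [(hp k).norm_le, hD _ fun i hi => (hfk i hi).2]
      _ = ε * ‖x‖ := by ring

end CStarAlgebra

section Matrix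

variable {m n K : Type*} [Fintype n] [Field K]

lemma Matrix.rank_add_le (A B : Matrix m n K) : (A + B).rank ≤ A.rank + B.rank := by
  rw [Matrix.rank, Matrix.rank, Matrix.rank, Matrix.mulVecLin_add]
  exact (Submodule.finrank_mono (LinearMap.range_add_le _ _)).trans
    (Submodule.finrank_add_le_finrank_add_finrank _ _)

lemma Matrix.rank_mul_sub_mul_le (X P : Matrix n n K) : (X * P - P * X).rank ≤ 2 * P.rank := by
  rw [sub_eq_add_neg, ← mul_neg, two_mul]
  exact (rank_add_le _ _).trans (add_le_add (rank_mul_le_right _ _) (rank_mul_le_left _ _))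

lemma Matrix.trace_eq_rank_of_isIdempotentElem [DecidableEq n] {P : Matrix n n K}
    (hP : IsIdempotentElem P) : P.trace = P.rank := by
  have h : IsIdempotentElem (Matrix.toLin' P) := hP.map Matrix.toLinAlgEquiv'
  rw [← Matrix.trace_toLin'_eq, (LinearMap.IsIdempotentElem.isProj_range _ h).trace]
  rfl

end Matrix

section TraceNorm

variable {n : Type*} [Fintype n] [DecidableEq n]

lemma traceNorm_eq_sum_sqrt_eigenvalues (A : Matrix n n ℂ) :
    traceNorm A = ∑ i, √((posSemidef_conjTranspose_mul_self A).1.eigenvalues i) := by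
  rw [traceNorm, trace_mul_cycle, Unitary.coe_star_mul_self, one_mul, trace_diagonal,
    Complex.re_sum]
  rfl

lemma sqrt_eigenvalues_conjTranspose_mul_self_le_norm (A : Matrix n n ℂ) (i : n) :
    √((posSemidef_conjTranspose_mul_self A).1.eigenvalues i) ≤ ‖A‖ := by
  have : Nonempty n := ⟨i⟩
  have h := spectrum.norm_le_norm_of_mem
    ((posSemidef_conjTranspose_mul_self A).1.eigenvalues_mem_spectrum_real i)
  rw [l2_opNorm_conjTranspose_mul_self] at h
  calc _ ≤ √(‖A‖ * ‖A‖) := Real.sqrt_le_sqrt ((Real.le_norm_self _).trans h)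
    _ = ‖A‖ := Real.sqrt_mul_self (norm_nonneg A)

lemma traceNorm_le_norm_mul_rank (A : Matrix n n ℂ) : traceNorm A ≤ ‖A‖ * A.rank := by
  set hAA := (posSemidef_conjTranspose_mul_self A).1
  have hrank : A.rank = (Finset.univ.filter fun i => hAA.eigenvalues i ≠ 0).card := by
    rw [← rank_conjTranspose_mul_self, hAA.rank_eq_card_non_zero_eigs, Fintype.card_subtype]
  rw [traceNorm_eq_sum_sqrt_eigenvalues, hrank, mul_comm, ← nsmul_eq_mul,
    ← Finset.sum_filter_of_ne (p := fun i => hAA.eigenvalues i ≠ 0)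
      fun i _ h hi => h (by rw [hi, Real.sqrt_zero])]
  exact Finset.sum_le_card_nsmul _ _ _ fun i _ =>
    sqrt_eigenvalues_conjTranspose_mul_self_le_norm A i

lemma traceNorm_mul_sub_mul_inv_trace_smul_le {P : Matrix n n ℂ} (hP : IsIdempotentElem P)
    (X : Matrix n n ℂ) :
    traceNorm (X * (P.trace⁻¹ • P) - (P.trace⁻¹ • P) * X) ≤ 2 * ‖X * P - P * X‖ := by
  set r := P.rank
  rw [trace_eq_rank_of_isIdempotentElem hP, mul_smul_comm, smul_mul_assoc, ← smul_sub]
  have hrank : ((r : ℂ)⁻¹ • (X * P - P * X)).rank ≤ 2 * r := by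
    rw [← smul_one_mul]
    exact (rank_mul_le_right _ _).trans (rank_mul_sub_mul_le X P)
  calc _ ≤ ‖(r : ℂ)⁻¹ • (X * P - P * X)‖ * ((r : ℂ)⁻¹ • (X * P - P * X)).rank :=
        traceNorm_le_norm_mul_rank _
    _ ≤ (r : ℝ)⁻¹ * ‖X * P - P * X‖ * (2 * r) := by
        rw [norm_smul, norm_inv, Complex.norm_natCast]
        gcongr
        exact_mod_cast hrank
    _ = 2 * ‖X * P - P * X‖ * ((r : ℝ)⁻¹ * r) := by ring
    _ ≤ 2 * ‖X * P - P * X‖ := mul_le_of_le_one_right (by positivity) inv_mul_le_one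

end TraceNorm

lemma Real.exp_neg_sq_div_le_of_le_abs {x c d : ℝ} (hc : 0 ≤ c) (hcx : c ≤ |x|) (hd : 0 ≤ d) :
    Real.exp (-x ^ 2 / d) ≤ Real.exp (-c ^ 2 / d) := by
  refine Real.exp_le_exp.mpr (div_le_div_of_nonneg_right (neg_le_neg ?_) hd)
  exact sq_le_sq.mpr (by rwa [abs_of_nonneg hc])

theorem woft_commutator_ground_state_general {n ι : Type*} [Fintype n] [DecidableEq n] [Fintype ι]
    (E : ι → ℝ) (P : ι → Matrix n n ℂ)
    (hherm : ∀ k, (P k).IsHermitian)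
    (hproj : ∀ k, P k * P k = P k)
    (horth : ∀ i j, i ≠ j → P i * P j = 0)
    (hsum : ∑ k, P k = 1)
    (k₀ : ι)
    (c : ℝ) (hc : 0 < c)
    (hgap : ∀ k, k ≠ k₀ → E k₀ + c ≤ E k)
    (ρ : Matrix n n ℂ) (hρ : ρ = ((P k₀).trace)⁻¹ • P k₀)
    (O : Matrix n n ℂ) (hO : ‖O‖ ≤ 1)
    (τ : ℝ)
    (Ohat : Matrix n n ℂ)
    (hOhat : Ohat = ∑ i, ∑ j,
      (Real.exp (-(E i - E j) ^ 2 / (4 * τ ^ 2)) : ℂ) • (P i * O * P j)) :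
    traceNorm (Ohat * ρ - ρ * Ohat) ≤ 2 * Real.exp (-c ^ 2 / (4 * τ ^ 2)) := by
  classical
  set ε := Real.exp (-c ^ 2 / (4 * τ ^ 2))
  set f : ι → ι → ℝ := fun i j => Real.exp (-(E i - E j) ^ 2 / (4 * τ ^ 2))
  have hOhat' : Ohat = blockSchurMul P f O := hOhat
  have hf : ∀ i, i ≠ k₀ → |f i k₀| ≤ ε ∧ |f k₀ i| ≤ ε := fun i hi => by
    have hgap' : c ≤ E i - E k₀ := by linarith [hgap i hi]
    simp only [f, abs_of_pos (Real.exp_pos _)]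
    constructor <;> refine Real.exp_neg_sq_div_le_of_le_abs hc.le ?_ (by positivity)
    exacts [le_abs.mpr (.inl hgap'), le_abs.mpr (.inr (by linarith))]
  have hcommutator : ‖Ohat * P k₀ - P k₀ * Ohat‖ ≤ ε := by
    rw [hOhat']
    refine (norm_blockSchurMul_mul_sub_mul_le (fun k => ⟨hproj k, hherm k⟩) horth hsum f k₀
      (Real.exp_pos _).le hf O).trans ?_
    exact mul_le_of_le_one_right (Real.exp_pos _).le hO
  rw [hρ]
  exact (traceNorm_mul_sub_mul_inv_trace_smul_le (hproj k₀) Ohat).trans (by gcongr)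

/-- For a Hamiltonian with spectral gap `c` above the ground energy, the uniform mixture `ρ`
over the ground space and any observable `O` with `‖O‖ ≤ 1` satisfy
`‖[Ô(τ), ρ]‖₁ ≤ 2 e^{−c²/(4τ²)}`, where `Ô(τ)` is the Gaussian-weighted operator Fourier
transform of `O`. -/
theorem woft_commutator_ground_state {n ι : Type*} [Fintype n] [DecidableEq n] [Fintype ι]
    (E : ι → ℝ) (P : ι → Matrix n n ℂ)
    (hherm : ∀ k, (P k).IsHermitian)
    (hproj : ∀ k, P k * P k = P k)
    (horth : ∀ i j, i ≠ j → P i * P j = 0)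
    (hsum : ∑ k, P k = 1)
    (H : Matrix n n ℂ) (hH : H = ∑ k, (E k : ℂ) • P k)
    (k₀ : ι) (hP0 : (P k₀).trace ≠ 0)
    (c : ℝ) (hc : 0 < c)
    (hgap : ∀ k, k ≠ k₀ → E k₀ + c ≤ E k)
    (ρ : Matrix n n ℂ) (hρ : ρ = ((P k₀).trace)⁻¹ • P k₀)
    (O : Matrix n n ℂ) (hO : ‖O‖ ≤ 1)
    (τ : ℝ) (hτ : 0 < τ)
    (Ohat : Matrix n n ℂ)
    (hOhat : Ohat = ∑ i, ∑ j,
      (Real.exp (-(E i - E j) ^ 2 / (4 * τ ^ 2)) : ℂ) • (P i * O * P j)) :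
    traceNorm (Ohat * ρ - ρ * Ohat) ≤ 2 * Real.exp (-c ^ 2 / (4 * τ ^ 2)) :=
  woft_commutator_ground_state_general E P hherm hproj horth hsum k₀ c hc hgap ρ hρ O hO τ Ohat
    hOhat
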